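/- Let z_{y,i} ∈ ℝ^d be feature vectors for classes y ∈ {1,…,C} and samples i ∈ {1,…,n}, and M_1,…,M_C ∈ ℝ^d classifier vectors. Define the cross-entropy loss L = Σ_y Σ_i log(1 + Σ_{y'≠y} exp(⟨M_{y'} − M_y, z_{y,i}⟩)) and the minimal margin p_min = min_{y≠y'} min_i ⟨M_y − M_{y'}, z_{y,i}⟩. Then log(1 + exp(−p_min)) ≤ L ≤ C·n · log(1 + (C−1)·exp(−p_min)). -/
import Mathlib


open scoped RealInnerProductSpace

theorem stmt_1 (C n d : ℕ) (hC : 2 ≤ C) (hn : 1 ≤ n)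
    (M : Fin C → EuclideanSpace ℝ (Fin d))
    (z : Fin C → Fin n → EuclideanSpace ℝ (Fin d))
    (L : ℝ)
    (hL : L = ∑ y : Fin C, ∑ i : Fin n,
      Real.log (1 + ∑ y' ∈ Finset.univ.filter (· ≠ y),
        Real.exp ⟪M y' - M y, z y i⟫))
    (pmin : ℝ)
    (hpmin : IsLeast {p : ℝ | ∃ y y' : Fin C, ∃ i : Fin n, y ≠ y' ∧
        p = ⟪M y - M y', z y i⟫} pmin) :
    Real.log (1 + Real.exp (-pmin)) ≤ L ∧
    L ≤ (C * n : ℝ) * Real.log (1 + ((C : ℝ) - 1) * Real.exp (-pmin)) := by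
  obtain ⟨⟨y₀, y₁, i₀, hne, hpe⟩, hlb⟩ := hpmin
  have hflip : ∀ (a b v : EuclideanSpace ℝ (Fin d)), ⟪a - b, v⟫ = -⟪b - a, v⟫ := by
    intro a b v
    simp [inner_sub_left]
  -- nonnegativity of inner sums
  have hsumnn : ∀ (y : Fin C) (i : Fin n),
      (0 : ℝ) ≤ ∑ y' ∈ Finset.univ.filter (· ≠ y), Real.exp ⟪M y' - M y, z y i⟫ := by
    intro y i
    exact Finset.sum_nonneg fun _ _ => (Real.exp_pos _).le
  have htermnn : ∀ (y : Fin C) (i : Fin n),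
      (0 : ℝ) ≤ Real.log (1 + ∑ y' ∈ Finset.univ.filter (· ≠ y),
        Real.exp ⟪M y' - M y, z y i⟫) := by
    intro y i
    apply Real.log_nonneg
    linarith [hsumnn y i]
  constructor
  · -- lower bound
    subst hL
    have key : Real.log (1 + Real.exp (-pmin)) ≤
        Real.log (1 + ∑ y' ∈ Finset.univ.filter (· ≠ y₀),
          Real.exp ⟪M y' - M y₀, z y₀ i₀⟫) := by
      apply Real.log_le_log (by positivity)
      have hmem : y₁ ∈ Finset.univ.filter (· ≠ y₀) := by
        simp [hne.symm]
      have := Finset.single_le_sum (f := fun y' => Real.exp ⟪M y' - M y₀, z y₀ i₀⟫)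
        (fun _ _ => (Real.exp_pos _).le) hmem
      have heq : ⟪M y₁ - M y₀, z y₀ i₀⟫ = -pmin := by
        rw [hflip, hpe]
      have h1 : Real.exp (-pmin) ≤ ∑ y' ∈ Finset.univ.filter (· ≠ y₀),
          Real.exp ⟪M y' - M y₀, z y₀ i₀⟫ := by simpa [heq] using this
      linarith
    calc Real.log (1 + Real.exp (-pmin))
        ≤ ∑ i : Fin n, Real.log (1 + ∑ y' ∈ Finset.univ.filter (· ≠ y₀),
            Real.exp ⟪M y' - M y₀, z y₀ i⟫) := by
          refine le_trans key ?_
          exact Finset.single_le_sum (fun i _ => htermnn y₀ i) (Finset.mem_univ i₀)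
      _ ≤ ∑ y : Fin C, ∑ i : Fin n, Real.log (1 + ∑ y' ∈ Finset.univ.filter (· ≠ y),
            Real.exp ⟪M y' - M y, z y i⟫) := by
          refine Finset.single_le_sum (f := fun y => ∑ i : Fin n,
            Real.log (1 + ∑ y' ∈ Finset.univ.filter (· ≠ y),
              Real.exp ⟪M y' - M y, z y i⟫)) ?_ (Finset.mem_univ y₀)
          intro y _
          exact Finset.sum_nonneg fun i _ => htermnn y i
  · -- upper bound
    subst hL
    have hbound : ∀ (y : Fin C) (i : Fin n),
        Real.log (1 + ∑ y' ∈ Finset.univ.filter (· ≠ y), Real.exp ⟪M y' - M y, z y i⟫)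
          ≤ Real.log (1 + ((C : ℝ) - 1) * Real.exp (-pmin)) := by
      intro y i
      apply Real.log_le_log (by linarith [hsumnn y i])
      have hsum : ∑ y' ∈ Finset.univ.filter (· ≠ y), Real.exp ⟪M y' - M y, z y i⟫
          ≤ ∑ y' ∈ Finset.univ.filter (· ≠ y), Real.exp (-pmin) := by
        apply Finset.sum_le_sum
        intro y' hy'
        have hy'ne : y' ≠ y := by simpa using hy'
        have hp : pmin ≤ ⟪M y - M y', z y i⟫ := hlb ⟨y, y', i, hy'ne.symm, rfl⟩
        have : ⟪M y' - M y, z y i⟫ ≤ -pmin := by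
          rw [hflip]; linarith
        exact Real.exp_le_exp.mpr this
      have hcard : (Finset.univ.filter (· ≠ y)).card = C - 1 := by
        rw [Finset.filter_ne', Finset.card_erase_of_mem (Finset.mem_univ y),
          Finset.card_univ, Fintype.card_fin]
      rw [Finset.sum_const, hcard] at hsum
      have : ((C - 1 : ℕ) : ℝ) = (C : ℝ) - 1 := by
        have : 1 ≤ C := le_trans one_le_two hC
        push_cast [this]
        ring
      rw [nsmul_eq_mul, this] at hsum
      linarith
    calc ∑ y : Fin C, ∑ i : Fin n, Real.log (1 + ∑ y' ∈ Finset.univ.filter (· ≠ y),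
          Real.exp ⟪M y' - M y, z y i⟫)
        ≤ ∑ y : Fin C, ∑ i : Fin n, Real.log (1 + ((C : ℝ) - 1) * Real.exp (-pmin)) := by
          apply Finset.sum_le_sum
          intro y _
          exact Finset.sum_le_sum fun i _ => hbound y i
      _ = (C * n : ℝ) * Real.log (1 + ((C : ℝ) - 1) * Real.exp (-pmin)) := by
          simp [Finset.sum_const]
          ring
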